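/- (Integral representation of the characteristic function of the sample sum, formula (2.1)). For every real t and every 1 ≤ n < N, E exp{itS_{nN}} = (1/(√(2π) d_n(p))) ∫_{-π√(nq)}^{π√(nq)} ∏_{m=1}^N E exp{ itY_{mN}ξ_m + iτ(ξ_m − p)/√(nq) } dτ, where d_n(p) = √(2πnq) · C(N,n) p^n q^{N−n} with C(N,n) the binomial coefficient. -/

import Mathlib

open MeasureTheory ProbabilityTheory Real Filter Finset Asymptotics

noncomputable section

instance (α : Type*) : MeasurableSpace (Equiv.Perm α) := ⊤

/-- The standard normal distribution function. -/
def Phi (u : ℝ) : ℝ := (Real.sqrt (2 * Real.pi))⁻¹ * ∫ t in Set.Iic u, Real.exp (-t ^ 2 / 2)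

/-- A sampling scheme: a population `Y 1, …, Y N` of independent random variables, auxiliary
i.i.d.-independent Bernoulli(p) variables `ξ m` (with `p = n/N`) independent of the `Y`'s, and a
uniformly random permutation `r` independent of the `Y`'s. -/
structure PreScheme where
  N : ℕ
  n : ℕ
  hn1 : 1 ≤ n
  hnN : n ≤ N
  Ω : Type
  mΩ : MeasureSpace Ω

attribute [instance] PreScheme.mΩ

structure Scheme extends PreScheme where
  probΩ : IsProbabilityMeasure (volume : Measure Ω)
  Y : Fin N → Ω → ℝ
  measY : ∀ m, Measurable (Y m)
  ξ : Fin N → Ω → ℝ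
  measξ : ∀ m, Measurable (ξ m)
  ξ01 : ∀ m ω, ξ m ω = 0 ∨ ξ m ω = 1
  ξbern : ∀ m, (volume {ω | ξ m ω = 1}).toReal = (n : ℝ) / N
  indepAll : iIndepFun
    (Sum.elim Y ξ) volume
  r : Ω → Equiv.Perm (Fin N)
  meas_r : Measurable r
  unif_r : ∀ e : Equiv.Perm (Fin N), (volume {ω | r ω = e}).toReal = 1 / N.factorial
  indep_r : IndepFun (fun ω => fun m => Y m ω) r volume

namespace Scheme

variable (S : Scheme)

instance : IsProbabilityMeasure (volume : Measure S.Ω) := S.probΩ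

/-- `p = n/N`. -/
def p : ℝ := (S.n : ℝ) / S.N

/-- `q = 1 - p`. -/
def q : ℝ := 1 - S.p

/-- `γ = N⁻¹ Σ E Y m`. -/
def γ : ℝ := (S.N : ℝ)⁻¹ * ∑ m, ∫ ω, S.Y m ω

/-- `σ² = N⁻¹ Σ [E(Y m − γ)² − p (E(Y m − γ))²]`. -/
def σsq : ℝ := (S.N : ℝ)⁻¹ * ∑ m, ((∫ ω, (S.Y m ω - S.γ) ^ 2) - S.p * (∫ ω, (S.Y m ω - S.γ)) ^ 2)

/-- `σ`, the square root of `σ²`. -/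
def sd : ℝ := Real.sqrt S.σsq

/-- The sample sum `S_{nN} = Y_{r 1} + … + Y_{r n}`. -/
def Ssum (ω : S.Ω) : ℝ :=
  ∑ i ∈ Finset.univ.filter (fun i : Fin S.N => (i : ℕ) < S.n), S.Y (S.r ω i) ω

/-- `Z m = (Y m − γ) ξ m − p E(Y m − γ)`. -/
def Z (m : Fin S.N) (ω : S.Ω) : ℝ :=
  (S.Y m ω - S.γ) * S.ξ m ω - S.p * ∫ ω', (S.Y m ω' - S.γ)

/-- `Z̃ m = Z m / (σ √n)`. -/
def Zt (m : Fin S.N) (ω : S.Ω) : ℝ := S.Z m ω / (S.sd * Real.sqrt S.n)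

/-- `ξ̃ m = (ξ m − p)/√(nq)`. -/
def ξt (m : Fin S.N) (ω : S.Ω) : ℝ := (S.ξ m ω - S.p) / Real.sqrt ((S.n : ℝ) * S.q)

/-- Lyapunov ratio `β k = Σ E |Z̃ m|^k`. -/
def β (k : ℝ) : ℝ := ∑ m, ∫ ω, |S.Zt m ω| ^ k

/-- `κ l = (q^{l−1} + p^{l−1}) (nq)^{−(l−2)/2}`. -/
def κ (l : ℝ) : ℝ := (S.q ^ (l - 1) + S.p ^ (l - 1)) * ((S.n : ℝ) * S.q) ^ (-(l - 2) / 2)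

/-- `β⁽¹⁾ k`. -/
def β1 (k : ℝ) : ℝ :=
  ((S.N : ℝ)⁻¹ * ∑ m, ∫ ω, |S.Y m ω - S.p * (∫ ω', S.Y m ω') - S.q * S.γ| ^ k) /
    ((S.n : ℝ) ^ ((k - 2) / 2) * S.sd ^ k)

/-- `β⁽²⁾ k`. -/
def β2 (k : ℝ) : ℝ :=
  ((S.N : ℝ)⁻¹ * ∑ m, |∫ ω, (S.Y m ω - S.γ)| ^ k) / ((S.n : ℝ) ^ ((k - 2) / 2) * S.sd ^ k)

/-- `β̂ k = β⁽¹⁾ k + σ² β⁽²⁾ k`. -/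
def βhat (k : ℝ) : ℝ := S.β1 k + S.σsq * S.β2 k

/-- `V k = N⁻¹ Σ E|Y m − γ|^k`. -/
def V (k : ℝ) : ℝ := (S.N : ℝ)⁻¹ * ∑ m, ∫ ω, |S.Y m ω - S.γ| ^ k

/-- `μ k = V k / (σ^k n^{(k−2)/2})`. -/
def μ (k : ℝ) : ℝ := S.V k / (S.sd ^ k * (S.n : ℝ) ^ ((k - 2) / 2))

/-- `α_{kl}^{(i)} = N⁻¹ Σ (E(Y m − γ)^k)^i (E(Y m − γ))^l`. -/
def α (k l i : ℕ) : ℝ :=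
  (S.N : ℝ)⁻¹ * ∑ m, (∫ ω, (S.Y m ω - S.γ) ^ k) ^ i * (∫ ω, (S.Y m ω - S.γ)) ^ l

/-- `Λ₁ = α₃₀ − 3pα₂₁ + 2p²α₀₃`. -/
def Λ₁ : ℝ := S.α 3 0 1 - 3 * S.p * S.α 2 1 1 + 2 * S.p ^ 2 * S.α 0 3 1

/-- `Λ₂`. -/
def Λ₂ : ℝ := S.α 4 0 1 - 4 * S.p * S.α 3 1 1 + 12 * S.p ^ 2 * S.α 2 2 1 -
  6 * S.p ^ 3 * S.α 0 4 1 - 3 * S.p * S.α 2 0 2 - 3 * S.q * (S.α 2 0 1 - 2 * S.p * S.α 0 2 1) ^ 2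

/-- The two-term Edgeworth approximation `𝕎₂`. -/
def W2 (u : ℝ) : ℝ :=
  Phi u + (1 - u ^ 2) * Real.exp (-u ^ 2 / 2) * S.Λ₁ / (6 * S.sd ^ 3 * Real.sqrt (2 * Real.pi * S.n))

/-- The three-term Edgeworth approximation `𝕎₃`. -/
def W3 (u : ℝ) : ℝ :=
  Phi u - Real.exp (-u ^ 2 / 2) / Real.sqrt (2 * Real.pi) *
    ((u ^ 2 - 1) * S.Λ₁ / (6 * S.sd ^ 3 * Real.sqrt S.n) +
      (1 / (72 * S.n * S.sd ^ 6)) *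
        ((u ^ 5 - 10 * u ^ 3 + 15 * u) * S.Λ₁ ^ 2 + 3 * (u ^ 3 - 3 * u) * S.σsq * S.Λ₂ +
          36 * u * S.p * S.q * S.sd ^ 4 * S.α 0 2 1))

/-- `𝕎_j` for `j = 1, 2, 3`. -/
def Wj (j : ℕ) (u : ℝ) : ℝ :=
  match j with
  | 1 => Phi u
  | 2 => S.W2 u
  | 3 => S.W3 u
  | _ => 0

/-- `P_N(x) = P{S_{nN} < xσ√n + nγ}`. -/
def PN (x : ℝ) : ℝ := (volume {ω | S.Ssum ω < x * S.sd * Real.sqrt S.n + S.n * S.γ}).toReal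

/-- `Δ_j = sup_u |P{S_{nN} < uσ√n + nγ} − 𝕎_j(u)|`. -/
def Δ (j : ℕ) : ℝ := ⨆ u : ℝ, |S.PN u - S.Wj j u|

/-- The normalized characteristic function `φ_n(t) = E exp(it(S_{nN} − nγ)/(σ√n))`. -/
def φ (t : ℝ) : ℂ :=
  ∫ ω, Complex.exp (Complex.I * t * ((S.Ssum ω - S.n * S.γ) / (S.sd * Real.sqrt S.n)))

/-- `χ(d₀,d₁) = I{d₀<d₁} ∫_{d₀≤|t|≤d₁} |φ_n(tσ√n)/t| dt`. -/
def χ (d₀ d₁ : ℝ) : ℝ :=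
  if d₀ < d₁ then
    ∫ t in {t : ℝ | d₀ ≤ |t| ∧ |t| ≤ d₁}, ‖S.φ (t * (S.sd * Real.sqrt S.n)) / t‖
  else 0

/-- Characteristic function of `Y m`. -/
def chfY (m : Fin S.N) (t : ℝ) : ℂ := ∫ ω, Complex.exp (Complex.I * t * S.Y m ω)

/-- `χ₁(d₀,d₁)`. -/
def χ1 (d₀ d₁ : ℝ) : ℝ :=
  Real.sqrt ((S.n : ℝ) * S.q) * Real.log d₁ *
    Real.exp (-(S.n : ℝ) *
      (1 - ⨆ t : {t : ℝ // d₀ ≤ |t| ∧ |t| ≤ d₁},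
        (S.N : ℝ)⁻¹ * ∑ m, ‖S.chfY m t‖))

/-- `χ₂(d₀,d₁)`. -/
def χ2 (d₀ d₁ : ℝ) : ℝ :=
  Real.sqrt ((S.n : ℝ) * S.q) * Real.log d₁ *
    Real.exp (-2 * S.n * S.q *
      (1 - ⨆ t : {t : ℝ // d₀ ≤ |t| ∧ |t| ≤ d₁},
        (S.N : ℝ)⁻¹ * ‖∑ m, S.chfY m t‖))

/-- `ψ m (t,τ) = E exp(i(t Z̃ m + τ ξ̃ m))`. -/
def ψ (m : Fin S.N) (t τ : ℝ) : ℂ :=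
  ∫ ω, Complex.exp (Complex.I * (t * S.Zt m ω + τ * S.ξt m ω))

/-- `N^{-1/2} P_{1,N}(t,τ)`. -/
def Pq1 (t τ : ℝ) : ℂ :=
  Complex.I ^ 3 / 6 * ∑ m, ((∫ ω, (t * S.Zt m ω + τ * S.ξt m ω) ^ 3 : ℝ) : ℂ)

/-- `N^{-1} P_{2,N}(t,τ)`. -/
def Pq2 (t τ : ℝ) : ℂ :=
  Complex.I ^ 4 / 24 *
      ∑ m, (((∫ ω, (t * S.Zt m ω + τ * S.ξt m ω) ^ 4) -
        3 * (∫ ω, (t * S.Zt m ω + τ * S.ξt m ω) ^ 2) ^ 2 : ℝ) : ℂ) +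
    S.Pq1 t τ ^ 2 / 2

/-- `P̃_j(t,τ)` for `j = 1, 2, 3`. -/
def Ptil (j : ℕ) (t τ : ℝ) : ℂ :=
  match j with
  | 1 => 1
  | 2 => 1 + S.Pq1 t τ
  | 3 => 1 + S.Pq1 t τ + S.Pq2 t τ
  | _ => 0

/-- approximating characteristic functions `W_{jn}(t)` for `j = 1, 2, 3`. -/
def Wc (j : ℕ) (t : ℝ) : ℂ :=
  ((Real.exp (-t ^ 2 / 2) : ℝ) : ℂ) *
    (match j with
    | 1 => (1 : ℂ)
    | 2 => 1 + (Complex.I * t) ^ 3 * ((S.Λ₁ / (6 * Real.sqrt S.n * S.sd ^ 3) : ℝ) : ℂ)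
    | 3 => 1 + (Complex.I * t) ^ 3 * ((S.Λ₁ / (6 * Real.sqrt S.n * S.sd ^ 3) : ℝ) : ℂ) +
        (Complex.I * t) ^ 6 * ((S.Λ₁ ^ 2 / (72 * S.n * S.sd ^ 6) : ℝ) : ℂ) +
        (Complex.I * t) ^ 4 * ((S.Λ₂ / (24 * S.n * S.sd ^ 4) : ℝ) : ℂ) +
        (Complex.I * t) ^ 2 * ((S.p * S.q * S.α 0 2 1 / (2 * S.n * S.σsq) : ℝ) : ℂ)
    | _ => 0)

/-- `T_{j,N}` of Theorem 3.2. -/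
def TT (δ : ℝ) (j : ℕ) : ℝ :=
  0.0126 * max (S.βhat (min 3 (1 + (j : ℝ) + δ)))⁻¹
    (S.β (min 3 (1 + (j : ℝ) + δ)) + ((S.n : ℝ) * S.q) ^ (-(1 / 2) : ℝ))⁻¹

/-- `T_{j,N}` of Lemma 4.5. -/
def TL (δ : ℝ) (j : ℕ) : ℝ :=
  0.01 * max (S.βhat (min 3 (1 + (j : ℝ) + δ)))⁻¹
    (S.β (min 3 (1 + (j : ℝ) + δ)) + ((S.n : ℝ) * S.q) ^ (-(1 / 2) : ℝ))⁻¹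

/-- `T̃_j` of Theorem 3.3. -/
def Ttil (δ : ℝ) (j : ℕ) : ℝ := 0.115 * (S.μ (min 3 (1 + (j : ℝ) + δ)))⁻¹

/-- The Lindeberg sum `L_{2N}(ε) = Σ E[Z̃ m² I{|Z̃ m| ≥ ε}]`. -/
def L2 (ε : ℝ) : ℝ := ∑ m, ∫ ω in {ω' | ε ≤ |S.Zt m ω'|}, (S.Zt m ω) ^ 2

end Scheme

/-- Mean of a finite list of numbers. -/
def abar {N : ℕ} (a : Fin N → ℝ) : ℝ := (N : ℝ)⁻¹ * ∑ m, a m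

/-- `b² = N⁻¹ Σ (a m − ā)²`. -/
def bsq {N : ℕ} (a : Fin N → ℝ) : ℝ := (N : ℝ)⁻¹ * ∑ m, (a m - abar a) ^ 2

/-- `ã m = (a m − ā)/b`. -/
def atil {N : ℕ} (a : Fin N → ℝ) (m : Fin N) : ℝ := (a m - abar a) / Real.sqrt (bsq a)

/-- `A k = N⁻¹ Σ ã m ^ k`. -/
def Acoef {N : ℕ} (a : Fin N → ℝ) (k : ℕ) : ℝ := (N : ℝ)⁻¹ * ∑ m, atil a m ^ k

/-!
Conditioning on the random permutation, `E exp(itS_{nN})` is the average of `∏_{m ∈ B} E exp(itY_m)`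
over the `n`-element subsets `B` of the population. On the other side, with `s = √(nq)`, the
`m`-th factor of the integrand is `p E exp(itY_m) e^{iτq/s} + q e^{-iτp/s}`; expanding the product
over subsets `A` gives a trigonometric polynomial in `τ` in which `A` carries the frequency
`(|A| - n)/s`, and integrating over the full period `[-πs, πs]` keeps exactly the subsets of size `n`,
each with weight `2πs pⁿ q^{N-n}`.
-/

open scoped Nat

theorem Finset.choose_card_nsmul_sum_perm_map {α M : Type*} [Fintype α] [DecidableEq α]
    [AddCommMonoid M] (I : Finset α) (g : Finset α → M) :
    (Fintype.card α).choose #I • ∑ e : Equiv.Perm α, g (I.map e.toEmbedding) =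
      (Fintype.card α)! • ∑ B ∈ powersetCard #I univ, g B := by
  have h_transitive : ∀ B ∈ powersetCard #I univ,
      ∑ e : Equiv.Perm α, g (I.map e.toEmbedding) = ∑ e : Equiv.Perm α, g (B.map e.toEmbedding) := by
    intro B hB
    obtain ⟨σ, rfl⟩ := Equiv.Perm.exists_map_finset_eq I B (mem_powersetCard.1 hB).2.symm
    refine Fintype.sum_equiv (Equiv.mulRight σ⁻¹) _ _ fun e => ?_
    rw [map_map]
    congr 2
    ext x
    simp
  have h_invariant : ∀ e : Equiv.Perm α,
      ∑ B ∈ powersetCard #I univ, g (B.map e.toEmbedding) = ∑ B ∈ powersetCard #I univ, g B := by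
    intro e
    calc ∑ B ∈ powersetCard #I univ, g (B.map e.toEmbedding)
        = ∑ B ∈ (powersetCard #I univ).map (mapEmbedding e.toEmbedding).toEmbedding, g B :=
          by rw [sum_map]; rfl
      _ = ∑ B ∈ powersetCard #I univ, g B := by rw [← powersetCard_map, map_univ_equiv e]
  calc _ = ∑ B ∈ powersetCard #I univ, ∑ e : Equiv.Perm α, g (I.map e.toEmbedding) := by
        rw [sum_const, card_powersetCard, card_univ (α := α)]
    _ = ∑ e : Equiv.Perm α, ∑ B ∈ powersetCard #I univ, g (B.map e.toEmbedding) := by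
        rw [sum_congr rfl h_transitive, sum_comm]
    _ = _ := by
        rw [sum_congr rfl fun e _ => h_invariant e, sum_const, card_univ, Fintype.card_perm]

theorem integral_cexp_I_mul_int_div (k : ℤ) (s : ℝ) :
    ∫ τ in -(π * s)..π * s, Complex.exp (Complex.I * τ * (k / s)) =
      if k = 0 then ((2 * π * s : ℝ) : ℂ) else 0 := by
  split_ifs with hk
  · simp [hk]
    ring
  by_cases hs : s = 0
  · simp [hs]
  have hs' : (s : ℂ) ≠ 0 := by exact_mod_cast hs
  have hc : Complex.I * (k / s) ≠ 0 := by simp [hk, hs]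
  have h_comm : ∀ τ : ℝ, Complex.I * τ * (k / s) = Complex.I * (k / s) * τ := fun τ => by ring
  simp_rw [h_comm]
  rw [integral_exp_mul_complex hc, div_eq_zero_iff, sub_eq_zero]
  left
  -- the endpoints differ by `2πk i`
  refine Complex.exp_eq_exp_iff_exists_int.2 ⟨k, ?_⟩
  push_cast
  field_simp
  ring

section Independence

variable {Ω 𝓧 ι E : Type*} {mΩ : MeasurableSpace Ω} {μ : Measure Ω} [MeasurableSpace 𝓧]

theorem integral_comp_eq_sum_of_indepFun [NormedAddCommGroup E] [NormedSpace ℝ E]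
    [MeasurableSpace ι] [MeasurableSingletonClass ι]
    {X : Ω → 𝓧} {R : Ω → ι} (hXR : IndepFun X R μ) (hX : AEMeasurable X μ) (hR : Measurable R)
    (s : Finset ι) (hRs : ∀ ω, R ω ∈ s) {F : 𝓧 → ι → E}
    (hFm : ∀ i ∈ s, AEStronglyMeasurable (F · i) (μ.map X))
    (hFi : ∀ i ∈ s, Integrable (fun ω => F (X ω) i) μ) :
    ∫ ω, F (X ω) (R ω) ∂μ = ∑ i ∈ s, μ.real (R ⁻¹' {i}) • ∫ ω, F (X ω) i ∂μ := by
  have h_split : (fun ω => F (X ω) (R ω)) =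
      fun ω => ∑ i ∈ s, (R ⁻¹' {i}).indicator (fun ω => F (X ω) i) ω := by
    ext ω
    rw [sum_eq_single_of_mem (R ω) (hRs ω)]
    · simp
    · intro i _ hi
      exact Set.indicator_of_notMem (Ne.symm hi) _
  rw [h_split, integral_finsetSum s fun i hi =>
    (hFi i hi).indicator (hR (measurableSet_singleton i))]
  refine sum_congr rfl fun i hi => ?_
  rw [integral_indicator (hR (measurableSet_singleton i))]
  exact ((IndepFun_iff_Indep _ _ _).1 hXR).symm.setIntegral_eq_smul hR.comap_le hX
    ⟨{i}, measurableSet_singleton i, rfl⟩ (hFm i hi)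

theorem integral_cexp_sum_of_iIndepFun {X : ι → Ω → ℝ} (hX : iIndepFun X μ)
    (hXm : ∀ i, AEMeasurable (X i) μ) (A : Finset ι) (t : ℝ) :
    ∫ ω, Complex.exp (Complex.I * t * ↑(∑ i ∈ A, X i ω)) ∂μ =
      ∏ i ∈ A, ∫ ω, Complex.exp (Complex.I * t * X i ω) ∂μ := by
  have hA := hX.precomp (Subtype.val_injective (p := (· ∈ A)))
  simp_rw [Complex.ofReal_sum, mul_sum, Complex.exp_sum, ← prod_coe_sort A]
  exact hA.integral_fun_prod_comp (f := fun _ (x : ℝ) => Complex.exp (Complex.I * t * x))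
    (fun i => hXm i) fun _ => by fun_prop

theorem integrable_cexp_of_re_eq_zero [IsFiniteMeasure μ] {f : Ω → ℂ}
    (hf : AEStronglyMeasurable f μ) (hre : ∀ ω, (f ω).re = 0) :
    Integrable (fun ω => Complex.exp (f ω)) μ :=
  .of_bound (Complex.continuous_exp.comp_aestronglyMeasurable hf) 1
    (ae_of_all _ fun ω => by simp [Complex.norm_exp, hre])

end Independence

namespace Scheme

variable (S : Scheme)

theorem iIndepFun_Y : iIndepFun S.Y volume :=
  (S.indepAll.precomp Sum.inl_injective :)

theorem p_pos : 0 < S.p :=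
  div_pos (Nat.cast_pos.2 S.hn1) (Nat.cast_pos.2 (S.hn1.trans S.hnN))

theorem q_pos (hlt : S.n < S.N) : 0 < S.q := by
  have hN : (0 : ℝ) < S.N := Nat.cast_pos.2 (S.hn1.trans S.hnN)
  rw [q, p, sub_pos, div_lt_one hN]
  exact_mod_cast hlt

theorem N_mul_p : (S.N : ℝ) * S.p = S.n := by
  have hN : (S.N : ℝ) ≠ 0 := Nat.cast_ne_zero.2 (by have := S.hn1; have := S.hnN; omega)
  rw [p]; field_simp

theorem integral_cexp_Ssum (t : ℝ) :
    ∫ ω, Complex.exp (Complex.I * t * S.Ssum ω) =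
      ((S.N.choose S.n : ℂ))⁻¹ * ∑ B ∈ powersetCard S.n univ, ∏ m ∈ B, S.chfY m t := by
  set I₀ : Finset (Fin S.N) := univ.filter fun i => (i : ℕ) < S.n
  have hI₀ : #I₀ = S.n := by simp [I₀, Fin.card_filter_val_lt, S.hnN]
  have h_Ssum : ∀ ω, S.Ssum ω = ∑ m ∈ I₀.map (S.r ω).toEmbedding, S.Y m ω := fun ω => by
    rw [sum_map]; rfl
  have hY : ∀ m, Measurable (S.Y m) := S.measY
  have h_cond := integral_comp_eq_sum_of_indepFun S.indep_r
    (measurable_pi_lambda _ S.measY).aemeasurable S.meas_r univ (fun _ => mem_univ _)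
    (F := fun y e => Complex.exp (Complex.I * t * ↑(∑ m ∈ I₀.map e.toEmbedding, y m)))
    (fun e _ => by fun_prop)
    (fun e _ => integrable_cexp_of_re_eq_zero (by fun_prop) (by simp))
  have h_unif : ∀ e, volume.real (S.r ⁻¹' {e}) = ((S.N ! : ℕ) : ℝ)⁻¹ := fun e => by
    rw [measureReal_def, ← one_div]; exact S.unif_r e
  have h_count := choose_card_nsmul_sum_perm_map I₀ fun B => ∏ m ∈ B, S.chfY m t
  rw [Fintype.card_fin, hI₀, nsmul_eq_mul, nsmul_eq_mul] at h_count
  simp_rw [h_Ssum, h_cond, integral_cexp_sum_of_iIndepFun S.iIndepFun_Y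
    (fun m => (S.measY m).aemeasurable), h_unif, ← smul_sum, Complex.real_smul]
  have hC : (S.N.choose S.n : ℂ) ≠ 0 := Nat.cast_ne_zero.2 (Nat.choose_pos S.hnN).ne'
  have hF : ((S.N ! : ℕ) : ℂ) ≠ 0 := Nat.cast_ne_zero.2 (Nat.factorial_ne_zero _)
  unfold chfY at h_count ⊢
  push_cast at hF ⊢
  field_simp
  linear_combination h_count

theorem integral_cexp_Y_mul_ξ (m : Fin S.N) (t τ s : ℝ) :
    ∫ ω, Complex.exp (Complex.I * t * S.Y m ω * S.ξ m ω + Complex.I * τ * ((S.ξ m ω - S.p) / s)) =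
      Complex.exp (-(Complex.I * τ * (S.p / s))) *
        (S.p * S.chfY m t * Complex.exp (Complex.I * τ / s) + S.q) := by
  have hY : Measurable (S.Y m) := S.measY m
  have h_indep : IndepFun (S.Y m) (S.ξ m) volume :=
    S.indepAll.indepFun (show (Sum.inl m : Fin S.N ⊕ Fin S.N) ≠ Sum.inr m by simp)
  have h_cond := integral_comp_eq_sum_of_indepFun h_indep hY.aemeasurable (S.measξ m) {0, 1}
    (by simpa [or_comm] using S.ξ01 m)
    (F := fun (x i : ℝ) => Complex.exp (Complex.I * t * x * i + Complex.I * τ * ((i - S.p) / s)))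
    (fun i _ => by fun_prop)
    (fun i _ => integrable_cexp_of_re_eq_zero (by fun_prop) (by simp))
  have h_one : volume.real (S.ξ m ⁻¹' {1}) = S.p := by rw [measureReal_def]; exact S.ξbern m
  have h_zero : volume.real (S.ξ m ⁻¹' {0}) = S.q := by
    have : S.ξ m ⁻¹' {0} = (S.ξ m ⁻¹' {1})ᶜ := by
      ext ω; rcases S.ξ01 m ω with h | h <;> simp [h]
    rw [this, probReal_compl_eq_one_sub (S.measξ m (measurableSet_singleton 1)), h_one]; rfl
  have h_ξ_zero : ∀ x : ℝ, Complex.exp (Complex.I * t * x * ((0 : ℝ) : ℂ) +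
      Complex.I * τ * ((((0 : ℝ) : ℂ) - S.p) / s)) = Complex.exp (-(Complex.I * τ * (S.p / s))) :=
    fun x => by congr 1; push_cast; ring
  have h_ξ_one : ∀ x : ℝ, Complex.exp (Complex.I * t * x * ((1 : ℝ) : ℂ) +
      Complex.I * τ * ((((1 : ℝ) : ℂ) - S.p) / s)) =
        Complex.exp (-(Complex.I * τ * (S.p / s))) * Complex.exp (Complex.I * τ / s) *
          Complex.exp (Complex.I * t * x) :=
    fun x => by rw [← Complex.exp_add, ← Complex.exp_add]; congr 1; push_cast; ring
  rw [h_cond, sum_pair zero_ne_one, h_zero, h_one]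
  simp_rw [h_ξ_zero, h_ξ_one, integral_const_mul, integral_const, probReal_univ, one_smul,
    Complex.real_smul]
  unfold chfY
  ring

theorem prod_integral_cexp_Y_mul_ξ (t τ s : ℝ) :
    ∏ m, ∫ ω, Complex.exp (Complex.I * t * S.Y m ω * S.ξ m ω +
        Complex.I * τ * ((S.ξ m ω - S.p) / s)) =
      ∑ A ∈ (univ : Finset (Fin S.N)).powerset,
        ((S.p ^ #A * S.q ^ (S.N - #A) : ℝ) : ℂ) * (∏ m ∈ A, S.chfY m t) *
          Complex.exp (Complex.I * τ * ((#A - S.n : ℤ) / s)) := by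
  simp_rw [integral_cexp_Y_mul_ξ, prod_mul_distrib, prod_const, card_univ, Fintype.card_fin,
    prod_add, mul_sum]
  refine sum_congr rfl fun A _ => ?_
  have h_phase : Complex.exp (-(Complex.I * τ * (S.p / s))) ^ S.N *
      Complex.exp (Complex.I * τ / s) ^ #A = Complex.exp (Complex.I * τ * ((#A - S.n : ℤ) / s)) := by
    have hNp : (S.N : ℂ) * S.p = S.n := by exact_mod_cast S.N_mul_p
    rw [← Complex.exp_nat_mul, ← Complex.exp_nat_mul, ← Complex.exp_add]
    congr 1
    push_cast
    linear_combination (-(Complex.I * τ / s)) * hNp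
  rw [prod_const, card_univ_sdiff, Fintype.card_fin, prod_mul_distrib, prod_mul_distrib, prod_const,
    prod_const, ← h_phase]
  push_cast
  ring

theorem integral_prod_integral_cexp_Y_mul_ξ (t s : ℝ) (hs : 0 ≤ s) :
    ∫ τ in Set.Icc (-(π * s)) (π * s), ∏ m, ∫ ω, Complex.exp (Complex.I * t * S.Y m ω * S.ξ m ω +
        Complex.I * τ * ((S.ξ m ω - S.p) / s)) =
      ((2 * π * s * (S.p ^ S.n * S.q ^ (S.N - S.n)) : ℝ) : ℂ) *
        ∑ B ∈ powersetCard S.n univ, ∏ m ∈ B, S.chfY m t := by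
  rw [integral_Icc_eq_integral_Ioc, ← intervalIntegral.integral_of_le (by nlinarith [pi_pos])]
  simp_rw [prod_integral_cexp_Y_mul_ξ]
  rw [intervalIntegral.integral_finsetSum fun A _ => Continuous.intervalIntegrable (by fun_prop) _ _]
  simp_rw [intervalIntegral.integral_const_mul, integral_cexp_I_mul_int_div, mul_ite, mul_zero]
  rw [sum_ite, sum_const_zero, add_zero, powersetCard_eq_filter, mul_sum]
  refine sum_congr (filter_congr fun A _ => by omega) fun A hA => ?_
  rw [(mem_filter.1 hA).2]
  push_cast
  ring

end Scheme

/-- integral representation (2.1) of the characteristic function of the sample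
sum. -/
theorem stmt_0 (S : Scheme) (hlt : S.n < S.N) (t : ℝ) :
    (∫ ω, Complex.exp (Complex.I * t * S.Ssum ω)) =
      ((1 / (Real.sqrt (2 * Real.pi) *
          (Real.sqrt (2 * Real.pi * S.n * S.q) * (S.N.choose S.n) * S.p ^ S.n *
            S.q ^ (S.N - S.n))) : ℝ) : ℂ) *
        ∫ τ in Set.Icc (-(Real.pi * Real.sqrt ((S.n : ℝ) * S.q)))
            (Real.pi * Real.sqrt ((S.n : ℝ) * S.q)),
          ∏ m, ∫ ω, Complex.exp (Complex.I * t * S.Y m ω * S.ξ m ω +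
            Complex.I * τ * ((S.ξ m ω - S.p) / Real.sqrt ((S.n : ℝ) * S.q))) := by
  rw [S.integral_cexp_Ssum, S.integral_prod_integral_cexp_Y_mul_ξ t _ (sqrt_nonneg _), ← mul_assoc,
    ← Complex.ofReal_mul]
  congr 1
  have hs : 0 < √((S.n : ℝ) * S.q) := sqrt_pos.2 (mul_pos (Nat.cast_pos.2 S.hn1) (S.q_pos hlt))
  have hp : 0 < S.p ^ S.n := pow_pos S.p_pos _
  have hq : 0 < S.q ^ (S.N - S.n) := pow_pos (S.q_pos hlt) _
  have h_const : 1 / (√(2 * π) * (√(2 * π * S.n * S.q) * S.N.choose S.n * S.p ^ S.n *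
      S.q ^ (S.N - S.n))) * (2 * π * √(S.n * S.q) * (S.p ^ S.n * S.q ^ (S.N - S.n))) =
        (S.N.choose S.n : ℝ)⁻¹ := by
    have h_split : √(2 * π * S.n * S.q) = √(2 * π) * √(S.n * S.q) := by
      rw [mul_assoc (2 * π), sqrt_mul (by positivity)]
    rw [h_split]
    field_simp
    rw [sq_sqrt (by positivity)]
  rw [h_const, Complex.ofReal_inv, Complex.ofReal_natCast]
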